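/- arXiv:math/0011066 — 6 statements merged into one kernel-verified Lean document; each statement's English description precedes it below -/
import Mathlib

section
/- For every rational α such that the curve is nonsingular, the point (0, 0) on the curve Y² + (1−α)XY − αY = X³ − αX² has order exactly 5. -/
/-!
For the Tate normal form `E(b, c) : Y² + (1 - c)XY - bY = X³ - bX²` and `P = (0, 0)`, the chord and
tangent construction gives `2P = (b, bc)`, `3P = (c, b - c)` and `-2P = (b, 0)`. When `b = c` this
says `3P = -2P`, so `5P = 0`; as `P ≠ 0` and `5` is prime, `P` has order `5`. The discriminant is
divisible by `b³`, so `b ≠ 0`, which is what makes `P` nonsingular and `2P` a tangent doubling.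
-/

namespace WeierstrassCurve.Affine

variable {F : Type*} [Field F]

def tateNormalForm (b c : F) : WeierstrassCurve.Affine F :=
  { a₁ := 1 - c, a₂ := -b, a₃ := -b, a₄ := 0, a₆ := 0 }

lemma tateNormalForm_Δ (b c : F) : (tateNormalForm b c).Δ =
    b ^ 3 * (16 * b ^ 2 + b * (1 - 20 * c - 8 * c ^ 2) - c * (1 - c) ^ 3) := by
  simp only [tateNormalForm, WeierstrassCurve.Δ, WeierstrassCurve.b₂, WeierstrassCurve.b₄,
    WeierstrassCurve.b₆, WeierstrassCurve.b₈]
  ring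

lemma tateNormalForm_equation_b_mul (b c : F) : (tateNormalForm b c).Equation b (b * c) := by
  rw [equation_iff]; simp only [tateNormalForm]; ring

lemma tateNormalForm_equation_c_sub (b c : F) : (tateNormalForm b c).Equation c (b - c) := by
  rw [equation_iff]; simp only [tateNormalForm]; ring

lemma tateNormalForm_equation_b_zero (b c : F) : (tateNormalForm b c).Equation b 0 := by
  rw [equation_iff]; simp only [tateNormalForm]; ring

variable {b c : F}

lemma ne_zero_of_tateNormalForm_Δ_ne_zero (hΔ : (tateNormalForm b c).Δ ≠ 0) : b ≠ 0 := by
  rintro rfl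
  simp [tateNormalForm_Δ] at hΔ

lemma tateNormalForm_nonsingular_zero_zero (hb : b ≠ 0) :
    (tateNormalForm b c).Nonsingular 0 0 := by
  rw [nonsingular_iff]
  refine ⟨by simp [equation_iff, tateNormalForm], Or.inr ?_⟩
  simpa [tateNormalForm] using hb.symm

lemma tateNormalForm_neg_some_b_mul {h₂ : (tateNormalForm b c).Nonsingular b (b * c)}
    {h : (tateNormalForm b c).Nonsingular b 0} :
    -Point.some b (b * c) h₂ = Point.some b 0 h := by
  rw [Point.neg_some, Point.some.injEq]
  refine ⟨rfl, ?_⟩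
  simp only [negY, tateNormalForm]
  ring

variable [DecidableEq F]

lemma tateNormalForm_some_zero_zero_add_self {h₀ : (tateNormalForm b c).Nonsingular 0 0}
    {h₂ : (tateNormalForm b c).Nonsingular b (b * c)} (hb : b ≠ 0) :
    Point.some 0 0 h₀ + Point.some 0 0 h₀ = Point.some b (b * c) h₂ := by
  have hy : (0 : F) ≠ (tateNormalForm b c).negY 0 0 := by
    simpa [negY, tateNormalForm] using hb.symm
  have hslope : (tateNormalForm b c).slope 0 0 0 0 = 0 := by
    rw [slope_of_Y_ne rfl hy]
    simp [tateNormalForm]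
  rw [Point.add_self_of_Y_ne hy, Point.some.injEq, hslope]
  constructor <;> simp only [addX, addY, negAddY, negY, tateNormalForm] <;> ring

lemma tateNormalForm_some_b_mul_add_some_zero_zero {h₀ : (tateNormalForm b c).Nonsingular 0 0}
    {h₂ : (tateNormalForm b c).Nonsingular b (b * c)}
    {h₃ : (tateNormalForm b c).Nonsingular c (b - c)} (hb : b ≠ 0) :
    Point.some b (b * c) h₂ + Point.some 0 0 h₀ = Point.some c (b - c) h₃ := by
  have hslope : (tateNormalForm b c).slope b 0 (b * c) 0 = c := by
    rw [slope_of_X_ne hb]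
    field_simp
    ring
  rw [Point.add_of_X_ne hb, Point.some.injEq, hslope]
  constructor <;> simp only [addX, addY, negAddY, negY, tateNormalForm] <;> ring

lemma tateNormalForm_self_five_nsmul (hΔ : (tateNormalForm b b).Δ ≠ 0)
    (h₀ : (tateNormalForm b b).Nonsingular 0 0) : 5 • Point.some 0 0 h₀ = 0 := by
  have hb := ne_zero_of_tateNormalForm_Δ_ne_zero hΔ
  have nonsingular {x y : F} (h : (tateNormalForm b b).Equation x y) :=
    (equation_iff_nonsingular_of_Δ_ne_zero hΔ).mp h
  set P := Point.some 0 0 h₀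
  set Q := Point.some b (b * b) (nonsingular (tateNormalForm_equation_b_mul b b))
  have two_nsmul : P + P = Q := tateNormalForm_some_zero_zero_add_self hb
  have three_nsmul : Q + P = -Q := by
    rw [tateNormalForm_some_b_mul_add_some_zero_zero
        (h₃ := nonsingular (tateNormalForm_equation_c_sub b b)) hb,
      tateNormalForm_neg_some_b_mul (h := nonsingular (tateNormalForm_equation_b_zero b b))]
    simp only [sub_self]
  calc 5 • P = (P + P + P) + (P + P) := by abel
    _ = 0 := by rw [two_nsmul, three_nsmul, neg_add_cancel]

end WeierstrassCurve.Affine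

open WeierstrassCurve.Affine

/-- For rational `α` with the Tate normal form `Y² + (1−α)XY − αY = X³ − αX²`
nonsingular, the point `(0, 0)` has order exactly 5. -/
theorem tate_order_five (α : ℚ)
    (W : WeierstrassCurve.Affine ℚ)
    (hW : W = { a₁ := 1 - α, a₂ := -α, a₃ := -α, a₄ := 0, a₆ := 0 })
    (hΔ : W.Δ ≠ 0) :
    ∃ h : W.Nonsingular 0 0,
      addOrderOf (WeierstrassCurve.Affine.Point.some 0 0 h) = 5 := by
  obtain rfl : W = tateNormalForm α α := hW
  have h₀ := tateNormalForm_nonsingular_zero_zero (c := α) (ne_zero_of_tateNormalForm_Δ_ne_zero hΔ)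
  have : Fact (Nat.Prime 5) := ⟨Nat.prime_five⟩
  exact ⟨h₀, addOrderOf_eq_prime (tateNormalForm_self_five_nsmul hΔ h₀) (Point.some_ne_zero h₀)⟩
end

section
/- For every rational α such that the curve is nonsingular, the point (0, 0) on the curve Y² + (1−(α²−α))XY − (α³−α²)Y = X³ − (α³−α²)X² has order exactly 7. -/
/-!
On the Tate normal form `E(b, c)` the multiples of `P = (0, 0)` are explicit: the tangent at `P`
is horizontal, giving `2P = (b, bc)`, the chord through `2P` and `P` has slope `c`, giving
`3P = (c, b - c)`, so `-3P = (c, c²)`. Doubling `2P` lands on `(c, c²)` exactly when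
`b (b - c) = c³`, which holds for `b = α³ - α²`, `c = α² - α`; then `4P = -3P`, so `7P = 0`,
and `P ≠ 0` has prime order `7`.
-/

namespace WeierstrassCurve

def tateNormalForm {R : Type*} [CommRing R] (b c : R) : WeierstrassCurve R where
  a₁ := 1 - c
  a₂ := -b
  a₃ := -b
  a₄ := 0
  a₆ := 0

namespace TateNormalForm

open WeierstrassCurve.Affine

variable {F : Type*} [Field F] {b c : F}

lemma b_ne_zero_of_nonsingular_origin (h₀ : (tateNormalForm b c).toAffine.Nonsingular 0 0) :
    b ≠ 0 := by
  simpa [tateNormalForm] using (nonsingular_zero.mp h₀).2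

section IsElliptic

variable [(tateNormalForm b c).IsElliptic]

lemma nonsingular_iff {x y : F} :
    (tateNormalForm b c).toAffine.Nonsingular x y ↔
      y ^ 2 + (1 - c) * x * y - b * y = x ^ 3 - b * x ^ 2 := by
  rw [← equation_iff_nonsingular, equation_iff]
  simp only [tateNormalForm]
  constructor <;> intro h <;> linear_combination h

lemma nonsingular_origin : (tateNormalForm b c).toAffine.Nonsingular 0 0 :=
  nonsingular_iff.mpr (by ring)

end IsElliptic

variable [DecidableEq F] {h₀ : (tateNormalForm b c).toAffine.Nonsingular 0 0}

lemma two_nsmul_origin {h₂ : (tateNormalForm b c).toAffine.Nonsingular b (b * c)} :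
    2 • Point.some 0 0 h₀ = Point.some b (b * c) h₂ := by
  have hy : (0 : F) ≠ (tateNormalForm b c).toAffine.negY 0 0 := by
    simpa [negY, tateNormalForm, eq_comm] using b_ne_zero_of_nonsingular_origin h₀
  rw [two_nsmul, Point.add_self_of_Y_ne hy, Point.some.injEq]
  have hs : (tateNormalForm b c).toAffine.slope 0 0 0 0 = 0 := by
    rw [slope_of_Y_ne rfl hy]; simp [tateNormalForm]
  simp only [addX, addY, negAddY, negY, hs]
  simp only [tateNormalForm]
  constructor <;> ring

variable [(tateNormalForm b c).IsElliptic]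

lemma three_nsmul_origin {h₃ : (tateNormalForm b c).toAffine.Nonsingular c (b - c)} :
    3 • Point.some 0 0 h₀ = Point.some c (b - c) h₃ := by
  have hb := b_ne_zero_of_nonsingular_origin h₀
  have h₂ : (tateNormalForm b c).toAffine.Nonsingular b (b * c) := nonsingular_iff.mpr (by ring)
  rw [succ_nsmul, two_nsmul_origin (h₂ := h₂), Point.add_of_X_ne hb, Point.some.injEq]
  have hs : (tateNormalForm b c).toAffine.slope b 0 (b * c) 0 = c := by
    rw [slope_of_X_ne hb]; field_simp; ring
  simp only [addX, addY, negAddY, negY, hs]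
  simp only [tateNormalForm]
  constructor <;> ring

lemma neg_three_nsmul_origin {h₄ : (tateNormalForm b c).toAffine.Nonsingular c (c ^ 2)} :
    -(3 • Point.some 0 0 h₀) = Point.some c (c ^ 2) h₄ := by
  rw [three_nsmul_origin (h₃ := nonsingular_iff.mpr (by ring)), Point.neg_some, Point.some.injEq]
  refine ⟨rfl, ?_⟩
  simp only [negY, tateNormalForm]
  ring

lemma four_nsmul_origin (h7 : b * (b - c) = c ^ 3)
    {h₄ : (tateNormalForm b c).toAffine.Nonsingular c (c ^ 2)} :
    4 • Point.some 0 0 h₀ = Point.some c (c ^ 2) h₄ := by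
  have hb := b_ne_zero_of_nonsingular_origin h₀
  have hc : c ≠ 0 := by rintro rfl; exact hb (mul_self_eq_zero.mp (by simpa using h7))
  have h₂ : (tateNormalForm b c).toAffine.Nonsingular b (b * c) := nonsingular_iff.mpr (by ring)
  have hnegY : (tateNormalForm b c).toAffine.negY b (b * c) = 0 := by
    simp only [negY, tateNormalForm]; ring
  have hy : b * c ≠ (tateNormalForm b c).toAffine.negY b (b * c) := by
    rw [hnegY]; exact mul_ne_zero hb hc
  rw [show 4 = 2 * 2 by rfl, mul_nsmul, two_nsmul_origin (h₂ := h₂), two_nsmul,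
    Point.add_self_of_Y_ne hy, Point.some.injEq]
  have hs : (tateNormalForm b c).toAffine.slope b b (b * c) (b * c) = (b - c + c ^ 2) / c := by
    rw [slope_of_Y_ne rfl hy, hnegY, sub_zero, div_eq_div_iff (mul_ne_zero hb hc) hc]
    simp only [tateNormalForm]
    ring
  simp only [addX, addY, negAddY, negY, hs]
  simp only [tateNormalForm]
  constructor
  · field_simp
    linear_combination h7
  · field_simp
    linear_combination (c ^ 2 - b) * h7

lemma seven_nsmul_origin (h7 : b * (b - c) = c ^ 3) :
    7 • Point.some 0 0 h₀ = 0 := by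
  have h₄ : (tateNormalForm b c).toAffine.Nonsingular c (c ^ 2) := nonsingular_iff.mpr (by ring)
  rw [show 7 = 3 + 4 by rfl, add_nsmul, four_nsmul_origin h7 (h₄ := h₄),
    ← neg_three_nsmul_origin (h₀ := h₀) (h₄ := h₄), add_neg_cancel]

lemma addOrderOf_origin (h7 : b * (b - c) = c ^ 3) :
    addOrderOf (Point.some 0 0 h₀) = 7 :=
  have : Fact (Nat.Prime 7) := ⟨by norm_num⟩
  addOrderOf_eq_prime (seven_nsmul_origin h7) (Point.some_ne_zero h₀)

end TateNormalForm
end WeierstrassCurve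

/-- For rational `α` with the Tate normal form
`Y² + (1−(α²−α))XY − (α³−α²)Y = X³ − (α³−α²)X²` nonsingular, the point `(0, 0)` has
order exactly 7. -/
theorem tate_order_seven (α : ℚ)
    (W : WeierstrassCurve.Affine ℚ)
    (hW : W = { a₁ := 1 - (α ^ 2 - α), a₂ := -(α ^ 3 - α ^ 2), a₃ := -(α ^ 3 - α ^ 2),
                a₄ := 0, a₆ := 0 })
    (hΔ : W.Δ ≠ 0) :
    ∃ h : W.Nonsingular 0 0,
      addOrderOf (WeierstrassCurve.Affine.Point.some _ _ h) = 7 := by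
  subst hW
  have : (WeierstrassCurve.tateNormalForm (α ^ 3 - α ^ 2) (α ^ 2 - α)).IsElliptic :=
    ⟨hΔ.isUnit⟩
  exact ⟨WeierstrassCurve.TateNormalForm.nonsingular_origin,
    WeierstrassCurve.TateNormalForm.addOrderOf_origin (by ring)⟩
end

section
/- If an elliptic curve E over ℚ has a rational point of order 5, then E is isomorphic over ℚ to a curve of the form Y² + (1−α)XY − αY = X³ − αX² for some α ∈ ℚ. -/
/-!
Let `P = (x₀, y₀)` have order 5 and let `ℓ` be the slope of the tangent at `P`, which is not
vertical since `2P ≠ 0`. Moving `P` to the origin and its tangent to `Y = 0` gives a model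
`Y² + a₁XY + a₃Y = X³ + a₂X²` with `a₃ ≠ 0`, and `a₂ ≠ 0` because `P ≠ ±2P`. The relation
`3P = -2P`, read on `x`-coordinates, becomes `a₁a₂a₃ = a₂³ + a₃²`; rescaling by `u = a₃ / a₂`
makes `a₂ = a₃ = -α`, and the relation then forces `a₁ = 1 - α`.
-/

open WeierstrassCurve WeierstrassCurve.Affine

/-- The Tate normal form `E(b, c) : Y² + (1 - c)XY - bY = X³ - bX²`. -/
def WeierstrassCurve.tateNormalForm_s14 {R : Type*} [CommRing R] (b c : R) : WeierstrassCurve R :=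
  { a₁ := 1 - c, a₂ := -b, a₃ := -b, a₄ := 0, a₆ := 0 }

namespace WeierstrassCurve

variable {F : Type*} [Field F]

theorem exists_variableChange_eq_tateNormalForm {a₁ a₂ a₃ : F} (h₂ : a₂ ≠ 0) (h₃ : a₃ ≠ 0)
    (h : a₁ * a₂ * a₃ = a₂ ^ 3 + a₃ ^ 2) :
    ∃ (α : F) (C : VariableChange F),
      C • ({ a₁ := a₁, a₂ := a₂, a₃ := a₃, a₄ := 0, a₆ := 0 } : WeierstrassCurve F) =
        tateNormalForm_s14 α α := by
  refine ⟨-(a₂ ^ 3 / a₃ ^ 2), ⟨Units.mk0 (a₃ / a₂) (div_ne_zero h₃ h₂), 0, 0, 0⟩, ?_⟩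
  ext <;> simp only [variableChange_a₁, variableChange_a₂, variableChange_a₃, variableChange_a₄,
    variableChange_a₆, tateNormalForm_s14, Units.val_inv_eq_inv_val, Units.val_mk0, inv_div]
  · field_simp
    linear_combination h
  all_goals field_simp
  all_goals ring

namespace Affine

variable [DecidableEq F] {W : Affine F} {x₀ y₀ : F}

theorem variableChange_tangent_smul (h : W.Equation x₀ y₀) (hy : y₀ ≠ W.negY x₀ y₀) :
    (⟨1, x₀, W.slope x₀ x₀ y₀ y₀, y₀⟩ : VariableChange F) • W =
      { a₁ := W.a₁ + 2 * W.slope x₀ x₀ y₀ y₀,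
        a₂ := x₀ - W.addX x₀ x₀ (W.slope x₀ x₀ y₀ y₀),
        a₃ := y₀ - W.negY x₀ y₀, a₄ := 0, a₆ := 0 } := by
  have hℓ : W.slope x₀ x₀ y₀ y₀ * (y₀ - W.negY x₀ y₀) =
      3 * x₀ ^ 2 + 2 * W.a₂ * x₀ + W.a₄ - W.a₁ * y₀ := by
    rw [slope_of_Y_ne rfl hy, div_mul_cancel₀ _ (sub_ne_zero_of_ne hy)]
  rw [equation_iff] at h
  ext <;> simp only [variableChange_a₁, variableChange_a₂, variableChange_a₃, variableChange_a₄,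
    variableChange_a₆, inv_one, Units.val_one, one_pow, one_mul, addX, negY] at hℓ ⊢
  case a₄ => linear_combination -hℓ
  case a₆ => linear_combination -h
  all_goals ring

theorem order_five_relation_of_addX_eq (ℓ : F) (hx : x₀ ≠ W.addX x₀ x₀ ℓ)
    (h3 : W.addX x₀ (W.addX x₀ x₀ ℓ)
      (W.slope x₀ (W.addX x₀ x₀ ℓ) y₀ (W.addY x₀ x₀ y₀ ℓ)) = W.addX x₀ x₀ ℓ) :
    (W.a₁ + 2 * ℓ) * (x₀ - W.addX x₀ x₀ ℓ) * (y₀ - W.negY x₀ y₀) =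
      (x₀ - W.addX x₀ x₀ ℓ) ^ 3 + (y₀ - W.negY x₀ y₀) ^ 2 := by
  set x₂ := W.addX x₀ x₀ ℓ with hx₂
  set m := W.slope x₀ x₂ y₀ (W.addY x₀ x₀ y₀ ℓ) with hm_def
  have hm : m * (x₀ - x₂) = y₀ - W.addY x₀ x₀ y₀ ℓ := by
    rw [hm_def, slope_of_X_ne hx, div_mul_cancel₀ _ (sub_ne_zero_of_ne hx)]
  have hchord : (m + W.a₁ + ℓ) * (x₀ - x₂) = y₀ - W.negY x₀ y₀ := by
    simp only [addY, negAddY, negY] at hm ⊢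
    linear_combination hm
  have hx₃ : (m - ℓ) * (m + W.a₁ + ℓ) = -(x₀ - x₂) := by
    simp only [hx₂, addX] at h3 ⊢
    linear_combination h3
  -- `m - ℓ` is the slope of the chord through `P` and `2P` after normalization.
  linear_combination ((m - ℓ) * (x₀ - x₂) + (y₀ - W.negY x₀ y₀)) * hchord - (x₀ - x₂) ^ 2 * hx₃

theorem Point.addX_addX_eq_of_addOrderOf_eq_five (h₀ : W.Nonsingular x₀ y₀)
    (h5 : addOrderOf (Point.some x₀ y₀ h₀) = 5) :
    y₀ ≠ W.negY x₀ y₀ ∧ x₀ ≠ W.addX x₀ x₀ (W.slope x₀ x₀ y₀ y₀) ∧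
      W.addX x₀ (W.addX x₀ x₀ (W.slope x₀ x₀ y₀ y₀))
        (W.slope x₀ (W.addX x₀ x₀ (W.slope x₀ x₀ y₀ y₀)) y₀
          (W.addY x₀ x₀ y₀ (W.slope x₀ x₀ y₀ y₀))) =
        W.addX x₀ x₀ (W.slope x₀ x₀ y₀ y₀) := by
  set P := Point.some x₀ y₀ h₀
  have hP (n : ℕ) (hn : ¬5 ∣ n) : n • P ≠ 0 := fun h ↦ hn (h5 ▸ addOrderOf_dvd_of_nsmul_eq_zero h)
  have hy : y₀ ≠ W.negY x₀ y₀ := fun hy ↦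
    hP 2 (by norm_num) (two_nsmul P ▸ Point.add_self_of_Y_eq hy)
  have h₂ := nonsingular_add h₀ h₀ fun h ↦ hy h.2
  have h2P : P + P = Point.some _ _ h₂ := Point.add_self_of_Y_ne hy
  have hx : x₀ ≠ W.addX x₀ x₀ (W.slope x₀ x₀ y₀ y₀) := by
    rw [Ne, Point.X_eq_iff (h₁ := h₀) (h₂ := h₂), ← h2P]
    rintro (h | h)
    · exact hP 1 (by norm_num) (by rw [one_nsmul]; exact left_eq_add.mp h)
    · refine hP 3 (by norm_num) ?_
      rw [show 3 • P = P + (P + P) by abel]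
      exact eq_neg_iff_add_eq_zero.mp h
  have h₃ := nonsingular_add h₀ h₂ fun h ↦ hx h.1
  refine ⟨hy, hx, (Point.X_eq_iff (h₁ := h₃) (h₂ := h₂)).mpr (Or.inr ?_)⟩
  rw [← Point.add_of_X_ne (h₁ := h₀) (h₂ := h₂) hx, ← h2P]
  refine eq_neg_of_add_eq_zero_left ?_
  rw [← addOrderOf_nsmul_eq_zero P, h5]
  abel

end Affine

end WeierstrassCurve

theorem tate_normal_form_of_order_five_general (W : WeierstrassCurve.Affine ℚ)
    (h5 : ∃ P : W.Point, addOrderOf P = 5) :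
    ∃ (α : ℚ) (C : WeierstrassCurve.VariableChange ℚ),
      (C • W : WeierstrassCurve ℚ) =
        { a₁ := 1 - α, a₂ := -α, a₃ := -α, a₄ := 0, a₆ := 0 } := by
  obtain ⟨_ | @⟨x₀, y₀, h₀⟩, h5⟩ := h5
  · simp [← Point.zero_def] at h5
  obtain ⟨hy, hx, h3⟩ := Point.addX_addX_eq_of_addOrderOf_eq_five h₀ h5
  obtain ⟨α, C, hC⟩ := exists_variableChange_eq_tateNormalForm (sub_ne_zero_of_ne hx)
    (sub_ne_zero_of_ne hy) (order_five_relation_of_addX_eq _ hx h3)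
  exact ⟨α, C * _, by rw [mul_smul, variableChange_tangent_smul h₀.1 hy, hC]; rfl⟩

/-- If an elliptic curve over `ℚ` has a rational point of order 5, then it is related,
by an admissible change of Weierstrass coordinates over `ℚ`, to the Tate normal form
`Y² + (1−α)XY − αY = X³ − αX²` for some `α ∈ ℚ`. -/
theorem tate_normal_form_of_order_five (W : WeierstrassCurve.Affine ℚ) (hΔ : W.Δ ≠ 0)
    (h5 : ∃ P : W.Point, addOrderOf P = 5) :
    ∃ (α : ℚ) (C : WeierstrassCurve.VariableChange ℚ),
      (C • W : WeierstrassCurve ℚ) =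
        { a₁ := 1 - α, a₂ := -α, a₃ := -α, a₄ := 0, a₆ := 0 } :=
  tate_normal_form_of_order_five_general W h5
end

section
/- The elliptic curve E: Y² = X³ + 12933X − 2285226 over ℚ has the point (123, 1080) on it, and this point has order exactly 5. -/
/-!
Doubling `P = (123, 1080)` along its tangent (slope `27`) gives `2P = (483, -10800)`, and doubling
again (slope `-33`) gives `4P = (123, -1080) = -P`. Hence `5P = 0` with `P ≠ 0`, and `5` is prime.
-/

open WeierstrassCurve.Affine WeierstrassCurve.Affine.Point

lemma addOrderOf_eq_five_of_two_nsmul_two_nsmul_eq_neg {G : Type*} [AddGroup G] {P : G}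
    (hP : P ≠ 0) (h : 2 • 2 • P = -P) : addOrderOf P = 5 := by
  have : Fact (Nat.Prime 5) := ⟨by norm_num⟩
  refine addOrderOf_eq_prime ?_ hP
  rw [show 5 = 2 * 2 + 1 by rfl, succ_nsmul, mul_nsmul, h, neg_add_cancel]

namespace WeierstrassCurve.Affine.Point

variable {F : Type*} [Field F] [DecidableEq F] {W : WeierstrassCurve.Affine F}

lemma exists_some_add_self_eq_some {x y ℓ x' y' : F} {h : W.Nonsingular x y}
    (hy : y ≠ W.negY x y)
    (hℓ : ℓ * (y - W.negY x y) = 3 * x ^ 2 + 2 * W.a₂ * x + W.a₄ - W.a₁ * y)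
    (hx' : W.addX x x ℓ = x') (hy' : W.addY x x y ℓ = y') :
    ∃ h' : W.Nonsingular x' y', some x y h + some x y h = some x' y' h' := by
  have hslope : W.slope x x y y = ℓ := by
    rw [slope_of_Y_ne rfl hy, div_eq_iff (sub_ne_zero.mpr hy), hℓ]
  subst hx' hy' hslope
  exact ⟨_, add_self_of_Y_ne hy⟩

end WeierstrassCurve.Affine.Point

/-- The curve `Y² = X³ + 12933X − 2285226` (curve 110A1) contains the point
`(123, 1080)`, which has order exactly 5. -/
theorem curve_110A1_point_order_five
    (W : WeierstrassCurve.Affine ℚ)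
    (hW : W = { a₁ := 0, a₂ := 0, a₃ := 0, a₄ := 12933, a₆ := -2285226 }) :
    ∃ h : W.Nonsingular 123 1080,
      addOrderOf (WeierstrassCurve.Affine.Point.some _ _ h) = 5 := by
  have hP : W.Nonsingular 123 1080 := by
    rw [nonsingular_iff, equation_iff]
    norm_num [hW]
  refine ⟨hP, addOrderOf_eq_five_of_two_nsmul_two_nsmul_eq_neg (some_ne_zero hP) ?_⟩
  obtain ⟨h₂, h2P⟩ := exists_some_add_self_eq_some (h := hP) (ℓ := 27) (x' := 483) (y' := -10800)
    (by norm_num [hW]) (by norm_num [hW]) (by norm_num [hW]) (by norm_num [addY, hW])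
  obtain ⟨h₄, h4P⟩ := exists_some_add_self_eq_some (h := h₂) (ℓ := -33) (x' := 123) (y' := -1080)
    (by norm_num [hW]) (by norm_num [hW]) (by norm_num [hW]) (by norm_num [addY, hW])
  rw [two_nsmul, two_nsmul, h2P, h4P]
  exact eq_neg_of_add_eq_zero_left (add_of_Y_eq rfl (by norm_num [hW]))
end

section
/- The torsion subgroup of the elliptic curve E: Y² = X³ + X over ℚ is cyclic of order 2, generated by (0, 0). -/
/-!
Every affine rational point of `y² = x³ + x` is `(0, 0)`. Writing `x = a / c²` and `y = p / c³`
in lowest terms (the denominators of a point on an integral short Weierstrass curve are a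
square and its cube), the equation becomes `p² = a (a² + c⁴)` with coprime factors, so
`a = ± d²`. The minus sign is impossible for `c ≠ 0`, and the plus sign gives
`d⁴ + c⁴ = (p / d)²`, so `d = 0` by Fermat's theorem for exponent 4. Hence
`E(ℚ) = {O, (0, 0)}`, and `(0, 0)` has order 2.
-/

namespace Rat

theorem den_pow_three_eq_den_sq_of_sq_eq (A B : ℤ) {x y : ℚ} (h : y ^ 2 = x ^ 3 + A * x + B) :
    x.den ^ 3 = y.den ^ 2 := by
  set a := x.num
  set b : ℤ := (x.den : ℤ)
  set p := y.num
  set q : ℤ := (y.den : ℤ)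
  have hcleared : p ^ 2 * b ^ 3 = q ^ 2 * (a ^ 3 + b * (A * a * b + B * b ^ 2)) := by
    rw [← num_div_den x, ← num_div_den y] at h
    field_simp at h
    qify
    linear_combination h
  have hbN : IsCoprime b (a ^ 3 + b * (A * a * b + B * b ^ 2)) := by
    refine IsCoprime.add_mul_left_right (IsCoprime.pow_right ?_) _
    rw [Int.isCoprime_iff_gcd_eq_one, Int.gcd_comm]
    exact x.reduced
  have hqp : IsCoprime q p := by
    rw [Int.isCoprime_iff_gcd_eq_one, Int.gcd_comm]
    exact y.reduced
  have hb3_dvd : b ^ 3 ∣ q ^ 2 :=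
    hbN.pow_left.dvd_of_dvd_mul_right ⟨p ^ 2, by rw [← hcleared, mul_comm]⟩
  have hq2_dvd : q ^ 2 ∣ b ^ 3 := hqp.pow.dvd_of_dvd_mul_left ⟨_, hcleared⟩
  have hbq : b ^ 3 = q ^ 2 := Int.dvd_antisymm (by positivity) (by positivity) hb3_dvd hq2_dvd
  exact_mod_cast (show (x.den : ℤ) ^ 3 = (y.den : ℤ) ^ 2 from hbq)

end Rat

theorem Nat.exists_eq_sq_of_pow_three_eq_sq {n m : ℕ} (h : n ^ 3 = m ^ 2) :
    ∃ c, n = c ^ 2 ∧ m = c ^ 3 := by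
  obtain ⟨c, rfl⟩ : n ∣ m := (Nat.pow_dvd_pow_iff two_ne_zero).mp ⟨n, by rw [← h]; ring⟩
  rcases eq_or_ne n 0 with rfl | hn
  · exact ⟨0, by simp⟩
  have hnc : n = c ^ 2 := mul_left_cancel₀ (pow_ne_zero 2 hn) (by linear_combination h)
  exact ⟨c, hnc, by rw [hnc]; ring⟩

theorem Int.eq_zero_of_sq_eq_mul_sq_add_pow_four {a c p : ℤ} (hac : IsCoprime a c) (hc : c ≠ 0)
    (h : p ^ 2 = a * (a ^ 2 + c ^ 4)) : a = 0 := by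
  have hcop : IsCoprime a (a ^ 2 + c ^ 4) := by
    simpa [add_comm, sq] using hac.pow_right (n := 4) |>.add_mul_left_right a
  obtain ⟨d, rfl | rfl⟩ := Int.sq_of_isCoprime hcop h.symm
  · obtain ⟨e, rfl⟩ : d ∣ p :=
      (Int.pow_dvd_pow_iff two_ne_zero).mp ⟨d ^ 4 + c ^ 4, by rw [h]; ring⟩
    rcases eq_or_ne d 0 with rfl | hd
    · simp
    refine absurd (mul_left_cancel₀ (pow_ne_zero 2 hd) ?_) (not_fermat_42 (c := e) hd hc)
    linear_combination -h
  · have : 0 < c ^ 4 := by positivity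
    nlinarith [sq_nonneg p, pow_two_nonneg (d ^ 2)]

theorem Rat.eq_zero_of_sq_eq_cube_add_self {x y : ℚ} (h : y ^ 2 = x ^ 3 + x) :
    x = 0 ∧ y = 0 := by
  obtain ⟨c, hx, hy⟩ := Nat.exists_eq_sq_of_pow_three_eq_sq <|
    Rat.den_pow_three_eq_den_sq_of_sq_eq 1 0 (by simpa using h)
  have hc : c ≠ 0 := by rintro rfl; simp at hx
  have hcop : IsCoprime x.num c := by
    rw [Int.isCoprime_iff_gcd_eq_one]
    exact (Nat.coprime_pow_right_iff two_pos _ _).mp (hx ▸ x.reduced)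
  have hcleared : y.num ^ 2 = x.num * (x.num ^ 2 + (c : ℤ) ^ 4) := by
    rw [← Rat.num_div_den x, ← Rat.num_div_den y, hx, hy] at h
    push_cast at h
    field_simp at h
    qify
    linear_combination h
  have hx0 : x = 0 :=
    Rat.num_eq_zero.mp <| Int.eq_zero_of_sq_eq_mul_sq_add_pow_four hcop (mod_cast hc) hcleared
  exact ⟨hx0, by simpa [hx0] using h⟩

section TwoElements

variable {G : Type*} {g : G}

theorem two_nsmul_eq_zero_of_forall_eq_zero_or_eq [AddGroup G] (h : ∀ z : G, z = 0 ∨ z = g) :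
    2 • g = 0 := by
  rw [two_nsmul]
  rcases h (g + g) with hgg | hgg
  · exact hgg
  · rw [add_eq_right.mp hgg, add_zero]

theorem addOrderOf_eq_two_of_forall_eq_zero_or_eq [AddGroup G] (hg : g ≠ 0)
    (h : ∀ z : G, z = 0 ∨ z = g) : addOrderOf g = 2 :=
  haveI : Fact (Nat.Prime 2) := ⟨Nat.prime_two⟩
  addOrderOf_eq_prime (two_nsmul_eq_zero_of_forall_eq_zero_or_eq h) hg

theorem AddCommGroup.torsion_eq_zmultiples_of_forall_eq_zero_or_eq [AddCommGroup G]
    (h : ∀ z : G, z = 0 ∨ z = g) : AddCommGroup.torsion G = AddSubgroup.zmultiples g := by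
  ext z
  rcases h z with rfl | rfl
  · simp only [zero_mem]
  · refine iff_of_true ?_ (AddSubgroup.mem_zmultiples z)
    exact isOfFinAddOrder_iff_nsmul_eq_zero.mpr
      ⟨2, two_pos, two_nsmul_eq_zero_of_forall_eq_zero_or_eq h⟩

end TwoElements

theorem WeierstrassCurve.Affine.Point.eq_zero_or_eq_some_of_forall_equation {R : Type*}
    [CommRing R] {W : Affine R} {x₀ y₀ : R} (h₀ : W.Nonsingular x₀ y₀)
    (h : ∀ x y, W.Equation x y → x = x₀ ∧ y = y₀) (z : W.Point) :
    z = 0 ∨ z = some x₀ y₀ h₀ := by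
  rcases z with _ | ⟨x, y, hz⟩
  · exact .inl rfl
  · obtain ⟨rfl, rfl⟩ := h x y hz.1
    exact .inr rfl

open WeierstrassCurve.Affine in
/-- The torsion subgroup of `Y² = X³ + X` over `ℚ` is cyclic of order 2, generated by
the point `(0, 0)`. -/
theorem torsion_of_X3_plus_X
    (W : WeierstrassCurve.Affine ℚ)
    (hW : W = { a₁ := 0, a₂ := 0, a₃ := 0, a₄ := 1, a₆ := 0 }) :
    ∃ h : W.Nonsingular 0 0,
      addOrderOf (WeierstrassCurve.Affine.Point.some 0 0 h) = 2 ∧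
      AddCommGroup.torsion W.Point =
        AddSubgroup.zmultiples (WeierstrassCurve.Affine.Point.some 0 0 h) := by
  have hequation (x y : ℚ) : W.Equation x y ↔ y ^ 2 = x ^ 3 + x := by
    subst hW
    simp [equation_iff]
  have h₀ : W.Nonsingular 0 0 := by
    subst hW
    simp [nonsingular_iff]
  have hpoints := Point.eq_zero_or_eq_some_of_forall_equation h₀ fun x y hxy ↦
    Rat.eq_zero_of_sq_eq_cube_add_self ((hequation x y).mp hxy)
  exact ⟨h₀, addOrderOf_eq_two_of_forall_eq_zero_or_eq (Point.some_ne_zero h₀) hpoints,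
    AddCommGroup.torsion_eq_zmultiples_of_forall_eq_zero_or_eq hpoints⟩
end

section
/- For the elliptic curve E: Y² = X³ + X, and every odd prime p not dividing 4 (i.e. every odd prime p), the order of the group E(𝔽_p) is divisible by 4. -/
/-!
The point `(0, 0)` has order 2. Over a finite field one of `-1`, `2`, `-2` is a square, since the
squares have index 2 in the unit group. If `i ^ 2 = -1`, then `(i, 0)` is a second point of order 2
and the two span a Klein four-group. If `s ^ 2 = 2 x` with `x = ±1`, the tangent at `(x, s)` passes
through `(0, 0)`, so `2 • (x, s) = (0, 0)` and `(x, s)` has order 4.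
-/

open WeierstrassCurve.Affine

section

variable {G : Type*} [AddCommGroup G]

theorem four_dvd_natCard_of_two_torsion {P Q : G} (hP : 2 • P = 0) (hQ : 2 • Q = 0)
    (hP₀ : P ≠ 0) (hQ₀ : Q ≠ 0) (hPQ : P ≠ Q) : 4 ∣ Nat.card G := by
  classical
  have hordP : addOrderOf P = 2 := addOrderOf_eq_prime hP hP₀
  set H := AddSubgroup.zmultiples P
  have hQH : Q ∉ H := by
    rw [(addOrderOf_pos_iff.mp (hordP ▸ two_pos)).mem_zmultiples_iff_mem_range_addOrderOf, hordP]
    simp [Finset.range_add_one, hQ₀, hPQ.symm]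
  have hordQ : addOrderOf (Q : G ⧸ H) = 2 :=
    addOrderOf_eq_prime (by rw [← QuotientAddGroup.mk_nsmul, hQ]; rfl)
      (by rwa [Ne, QuotientAddGroup.eq_zero_iff])
  rw [AddSubgroup.card_eq_card_quotient_mul_card_addSubgroup H, Nat.card_zmultiples, hordP]
  exact mul_dvd_mul_right (hordQ ▸ addOrderOf_dvd_natCard (Q : G ⧸ H)) 2

theorem four_dvd_natCard_of_two_nsmul_eq {R P : G} (hR : 2 • R = P) (hP : 2 • P = 0)
    (hP₀ : P ≠ 0) : 4 ∣ Nat.card G := by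
  have hordR : addOrderOf R = 2 ^ 2 :=
    addOrderOf_eq_prime_pow (n := 1) (by rwa [pow_one, hR])
      (by rw [pow_succ, mul_nsmul, pow_one, hR, hP])
  simpa [hordR] using addOrderOf_dvd_natCard R

end

theorem FiniteField.isSquare_neg_one_or_two_or_neg_two (F : Type*) [Field F] [Finite F] :
    IsSquare (-1 : F) ∨ IsSquare (2 : F) ∨ IsSquare (-2 : F) := by
  classical
  have := Fintype.ofFinite F
  by_contra! h
  obtain ⟨h₁, h₂, h₃⟩ := h
  have h₀ : (-2 : F) ≠ 0 := fun h => h₃ (h ▸ IsSquare.zero)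
  refine h₃ ((quadraticChar_one_iff_isSquare h₀).mp ?_)
  rw [show (-2 : F) = -1 * 2 by ring, map_mul, quadraticChar_neg_one_iff_not_isSquare.mpr h₁,
    quadraticChar_neg_one_iff_not_isSquare.mpr h₂]
  norm_num

def WeierstrassCurve.Affine.xCubedPlusX (F : Type*) [CommRing F] : WeierstrassCurve.Affine F :=
  { a₁ := 0, a₂ := 0, a₃ := 0, a₄ := 1, a₆ := 0 }

namespace WeierstrassCurve.Affine.xCubedPlusX

variable {F : Type*} [Field F]

theorem nonsingular_iff {x y : F} : (xCubedPlusX F).Nonsingular x y ↔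
    y ^ 2 = x ^ 3 + x ∧ (3 * x ^ 2 + 1 ≠ 0 ∨ y ≠ -y) := by
  simp [WeierstrassCurve.Affine.nonsingular_iff, equation_iff, xCubedPlusX, eq_comm (a := (0 : F))]

theorem negY_eq (x y : F) : (xCubedPlusX F).negY x y = -y := by
  simp [negY, xCubedPlusX]

theorem nonsingular_zero_zero : (xCubedPlusX F).Nonsingular 0 0 :=
  nonsingular_iff.mpr ⟨by ring, Or.inl (by norm_num)⟩

theorem nonsingular_of_sq_eq_neg_one (h2 : (2 : F) ≠ 0) {i : F} (hi : i ^ 2 = -1) :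
    (xCubedPlusX F).Nonsingular i 0 :=
  nonsingular_iff.mpr ⟨by linear_combination -i * hi,
    Or.inl (by rw [hi, show (3 : F) * -1 + 1 = -2 by norm_num]; exact neg_ne_zero.mpr h2)⟩

theorem nonsingular_of_sq_eq_one (h2 : (2 : F) ≠ 0) {x y : F} (hx : x ^ 2 = 1)
    (hy : y ^ 2 = 2 * x) : (xCubedPlusX F).Nonsingular x y :=
  nonsingular_iff.mpr ⟨by linear_combination hy - x * hx,
    Or.inl (by rw [hx, show (3 : F) * 1 + 1 = 2 * 2 by norm_num]; exact mul_ne_zero h2 h2)⟩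

variable [DecidableEq F]

theorem two_nsmul_some_of_y_eq_zero {x : F} (h : (xCubedPlusX F).Nonsingular x 0) :
    2 • Point.some _ _ h = 0 := by
  rw [two_nsmul]
  exact Point.add_self_of_Y_eq (by rw [negY_eq, neg_zero])

theorem two_nsmul_some_of_sq_eq_one (h2 : (2 : F) ≠ 0) {x y : F} (hx : x ^ 2 = 1)
    (hy : y ^ 2 = 2 * x) :
    2 • Point.some _ _ (nonsingular_of_sq_eq_one h2 hx hy) =
      Point.some _ _ nonsingular_zero_zero := by
  have hy₀ : y ≠ 0 := by
    rintro rfl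
    have : 2 * x = 0 := by linear_combination -hy
    have : x = 0 := (mul_eq_zero.mp this).resolve_left h2
    simp [this] at hx
  have hY : y ≠ (xCubedPlusX F).negY x y := by
    rw [negY_eq]
    intro h
    exact hy₀ ((mul_eq_zero.mp (by linear_combination h : 2 * y = 0)).resolve_left h2)
  have hℓ : (xCubedPlusX F).slope x x y y = 2 / y := by
    rw [slope_of_Y_ne rfl hY, negY_eq,
      div_eq_div_iff (by simpa [two_mul] using mul_ne_zero h2 hy₀) hy₀]
    simp only [xCubedPlusX]
    linear_combination 3 * y * hx
  have hX : (xCubedPlusX F).addX x x (2 / y) = 0 := by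
    simp only [addX, xCubedPlusX]
    field_simp
    linear_combination -4 * hx - 2 * x * hy
  rw [two_nsmul, Point.add_self_of_Y_ne hY, Point.some.injEq, addY, negAddY, hℓ, hX, negY_eq]
  refine ⟨rfl, ?_⟩
  field_simp
  linear_combination -hy

theorem four_dvd_natCard_point_of_isSquare_neg_one (h2 : (2 : F) ≠ 0) (h : IsSquare (-1 : F)) :
    4 ∣ Nat.card (xCubedPlusX F).Point := by
  obtain ⟨i, hi⟩ := h
  have hi₀ : i ≠ 0 := by
    rintro rfl
    simp at hi
  exact four_dvd_natCard_of_two_torsion (two_nsmul_some_of_y_eq_zero nonsingular_zero_zero)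
    (two_nsmul_some_of_y_eq_zero (nonsingular_of_sq_eq_neg_one h2 (by rw [sq, ← hi])))
    (Point.some_ne_zero _) (Point.some_ne_zero _) (by simp [hi₀.symm])

theorem four_dvd_natCard_point_of_sq_eq_one (h2 : (2 : F) ≠ 0) {x y : F} (hx : x ^ 2 = 1)
    (hy : y ^ 2 = 2 * x) : 4 ∣ Nat.card (xCubedPlusX F).Point :=
  four_dvd_natCard_of_two_nsmul_eq (two_nsmul_some_of_sq_eq_one h2 hx hy)
    (two_nsmul_some_of_y_eq_zero _) (Point.some_ne_zero _)

theorem four_dvd_natCard_point [Finite F] (h2 : (2 : F) ≠ 0) :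
    4 ∣ Nat.card (xCubedPlusX F).Point := by
  rcases FiniteField.isSquare_neg_one_or_two_or_neg_two F with h | ⟨s, hs⟩ | ⟨s, hs⟩
  · exact four_dvd_natCard_point_of_isSquare_neg_one h2 h
  · exact four_dvd_natCard_point_of_sq_eq_one h2 (x := 1) (one_pow 2) (by linear_combination -hs)
  · exact four_dvd_natCard_point_of_sq_eq_one h2 (x := -1) (by norm_num)
      (by linear_combination -hs)

end WeierstrassCurve.Affine.xCubedPlusX

/-- For every odd prime `p`, the number of points of `Y² = X³ + X` over `𝔽_p`
(including the point at infinity) is divisible by 4. -/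
theorem card_X3_plus_X_mod_p (p : ℕ) [Fact (Nat.Prime p)] (hodd : p ≠ 2)
    (Wp : WeierstrassCurve.Affine (ZMod p))
    (hWp : Wp = { a₁ := 0, a₂ := 0, a₃ := 0, a₄ := 1, a₆ := 0 }) :
    4 ∣ Nat.card Wp.Point := by
  subst hWp
  exact xCubedPlusX.four_dvd_natCard_point (Ring.two_ne_zero (by rwa [ZMod.ringChar_zmod_n]))
end
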